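/- For every integer n ≥ 1 and all x in [-1, 1], |(1 - x^2) * L_n'(x)| / (n(n+1)) ≤ Γ(n/2) / (sqrt(π) * (n+1) * Γ((n+1)/2)). -/

import Mathlib

/-!
Write `P = P_n`. The Rodrigues formula gives the Legendre equation
`(1 - x²) P'' - 2x P' + n(n+1) P = 0`, so Sonin's function
`H = ((1 - x²) P')² + n(n+1) (1 - x²) P²` has `H' = -2n(n+1) x P²`; hence on `[-1, 1]`
`((1 - x²) P')² ≤ H ≤ H(0) = P'(0)² + n(n+1) P(0)²`. For `n = 2m` only `P(0) = ±C(2m, m) / 4^m`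
survives, for `n = 2m + 1` only `P'(0) = ±(2m + 1) C(2m, m) / 4^m`. With
`Γ(m + 1/2) = √π m! C(2m, m) / 4^m` the odd case is an equality, while the even case reduces to
`π (4m + 1) (C(2m, m) / 4^m)² ≤ 4`, true because the left side increases with `m` to its
Wallis-product limit `4`.
-/

/-- The `n`-th Legendre polynomial on `ℝ`, via the Rodrigues formula,
normalized so that `legendre n 1 = 1`. -/
noncomputable def legendre (n : ℕ) : ℝ → ℝ :=
  fun x => (1 / (2 ^ n * (n.factorial : ℝ))) * iteratedDeriv n (fun y : ℝ => (y ^ 2 - 1) ^ n) x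

open Polynomial Nat Real

namespace Polynomial

theorem iteratedDeriv_eval (p : ℝ[X]) (k : ℕ) :
    iteratedDeriv k (fun x => p.eval x) = fun x => (derivative^[k] p).eval x := by
  induction k generalizing p with
  | zero => rfl
  | succ k ih =>
    have hd : _root_.deriv (fun x => p.eval x) = fun x => (derivative p).eval x := by
      ext x; exact p.deriv
    rw [iteratedDeriv_succ', hd, ih, Function.iterate_succ_apply]

theorem iterate_derivative_eval_zero {R : Type*} [Semiring R] (p : R[X]) (k : ℕ) :
    (derivative^[k] p).eval 0 = k ! * p.coeff k := by
  rw [← coeff_zero_eq_eval_zero, coeff_iterate_derivative, zero_add, nsmul_eq_mul,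
    Nat.descFactorial_self]

theorem X_sq_sub_one_mul_derivative_pow {R : Type*} [CommRing R] (n : ℕ) :
    (X ^ 2 - 1 : R[X]) * derivative ((X ^ 2 - 1) ^ n) = C (2 * n : R) * X * (X ^ 2 - 1) ^ n := by
  cases n with
  | zero => simp
  | succ n =>
    rw [derivative_pow_succ]
    simp only [derivative_sub, derivative_X_sq, derivative_one, map_mul, map_add, map_one,
      map_ofNat, map_natCast]
    push_cast
    ring

theorem coeff_X_sq_sub_one_pow {R : Type*} [CommRing R] (n k : ℕ) :
    ((X ^ 2 - 1 : R[X]) ^ n).coeff k =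
      if 2 ∣ k then (-1 : R) ^ (n - k / 2) * n.choose (k / 2) else 0 := by
  have h : (X ^ 2 - 1 : R[X]) ^ n = expand R 2 ((X + C (-1)) ^ n) := by
    simp [sub_eq_add_neg]
  rw [h, coeff_expand two_pos, coeff_X_add_C_pow]

theorem iterate_derivative_of_X_sq_sub_one_mul_derivative {R : Type*} [CommRing R] {f : R[X]}
    {a : R} (hf : (X ^ 2 - 1) * derivative f = C a * X * f) (k : ℕ) :
    (X ^ 2 - 1) * derivative (derivative (derivative^[k] f))
      + (2 * ((k : R[X]) + 1) - C a) * X * derivative (derivative^[k] f)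
      + ((k : R[X]) + 1) * ((k : R[X]) - C a) * derivative^[k] f = 0 := by
  induction k with
  | zero =>
    have h := congrArg derivative hf
    simp only [derivative_mul, derivative_sub, derivative_X_sq, derivative_one, derivative_C,
      derivative_X, map_ofNat] at h
    simp only [Function.iterate_zero_apply, Nat.cast_zero]
    linear_combination h
  | succ k ih =>
    have h := congrArg derivative ih
    simp only [derivative_mul, derivative_add, derivative_sub, derivative_X_sq, derivative_one,
      derivative_C, derivative_X, derivative_natCast, derivative_ofNat, derivative_zero,
      map_ofNat] at h
    rw [Function.iterate_succ_apply']
    push_cast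
    linear_combination h

end Polynomial

noncomputable def legendrePoly (n : ℕ) : ℝ[X] :=
  C (1 / (2 ^ n * n ! : ℝ)) * derivative^[n] ((X ^ 2 - 1 : ℝ[X]) ^ n)

theorem legendre_eq_eval (n : ℕ) : legendre n = fun x => (legendrePoly n).eval x := by
  have h : (fun y : ℝ => (y ^ 2 - 1) ^ n) = fun y => ((X ^ 2 - 1 : ℝ[X]) ^ n).eval y := by
    ext y; simp
  ext x
  simp only [legendre, legendrePoly, h, iteratedDeriv_eval, eval_mul, eval_C]

theorem deriv_legendre (n : ℕ) (x : ℝ) :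
    deriv (legendre n) x = (derivative (legendrePoly n)).eval x := by
  rw [legendre_eq_eval]
  exact Polynomial.deriv _

theorem legendrePoly_ode (n : ℕ) :
    (1 - X ^ 2) * derivative (derivative (legendrePoly n)) - 2 * X * derivative (legendrePoly n)
      + C ((n : ℝ) * (n + 1)) * legendrePoly n = 0 := by
  have h := iterate_derivative_of_X_sq_sub_one_mul_derivative
    (X_sq_sub_one_mul_derivative_pow (R := ℝ) n) n
  simp only [legendrePoly, derivative_mul, derivative_C, zero_mul, zero_add, map_mul, map_ofNat,
    map_natCast, map_add, map_one] at h ⊢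
  linear_combination (-C (1 / (2 ^ n * n ! : ℝ))) * h

theorem legendrePoly_eval_zero (n : ℕ) :
    (legendrePoly n).eval 0 = ((X ^ 2 - 1 : ℝ[X]) ^ n).coeff n / 2 ^ n := by
  rw [legendrePoly, eval_mul, eval_C, iterate_derivative_eval_zero]
  field_simp

theorem derivative_legendrePoly_eval_zero (n : ℕ) :
    (derivative (legendrePoly n)).eval 0
      = (n + 1) * ((X ^ 2 - 1 : ℝ[X]) ^ n).coeff (n + 1) / 2 ^ n := by
  rw [legendrePoly, derivative_mul, derivative_C, zero_mul, zero_add, eval_mul, eval_C,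
    ← Function.iterate_succ_apply' derivative, iterate_derivative_eval_zero, Nat.factorial_succ]
  push_cast
  field_simp

theorem legendrePoly_two_mul_eval_zero (m : ℕ) :
    (legendrePoly (2 * m)).eval 0 = (-1) ^ m * (centralBinom m / 4 ^ m) := by
  rw [legendrePoly_eval_zero, coeff_X_sq_sub_one_pow, if_pos (dvd_mul_right 2 m),
    Nat.mul_div_cancel_left m two_pos, two_mul, Nat.add_sub_cancel, ← two_mul,
    ← centralBinom_eq_two_mul_choose, pow_mul, mul_div_assoc]
  norm_num

theorem derivative_legendrePoly_two_mul_eval_zero (m : ℕ) :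
    (derivative (legendrePoly (2 * m))).eval 0 = 0 := by
  rw [derivative_legendrePoly_eval_zero, coeff_X_sq_sub_one_pow, if_neg (by omega)]
  simp

theorem legendrePoly_two_mul_add_one_eval_zero (m : ℕ) :
    (legendrePoly (2 * m + 1)).eval 0 = 0 := by
  rw [legendrePoly_eval_zero, coeff_X_sq_sub_one_pow, if_neg (by omega)]
  simp

theorem derivative_legendrePoly_two_mul_add_one_eval_zero (m : ℕ) :
    (derivative (legendrePoly (2 * m + 1))).eval 0
      = (-1) ^ m * (2 * m + 1) * (centralBinom m / 4 ^ m) := by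
  have hchoose :
      ((m + 1 : ℕ) : ℝ) * (2 * m + 1).choose (m + 1) = (2 * m + 1) * centralBinom m := by
    rw [centralBinom_eq_two_mul_choose]
    exact_mod_cast ((Nat.add_one_mul_choose_eq (2 * m) m).trans (mul_comm _ _)).symm
  rw [derivative_legendrePoly_eval_zero, coeff_X_sq_sub_one_pow, if_pos ⟨m + 1, by ring⟩,
    show (2 * m + 1 + 1) / 2 = m + 1 by omega, show 2 * m + 1 - (m + 1) = m by omega, pow_succ,
    pow_mul]
  push_cast at hchoose ⊢
  linear_combination (-1) ^ m / 4 ^ m * hchoose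

theorem le_apply_zero_of_mul_deriv_nonpos {f : ℝ → ℝ} (hf : Differentiable ℝ f)
    (hf' : ∀ x, x * deriv f x ≤ 0) (x : ℝ) : f x ≤ f 0 := by
  rcases le_total 0 x with hx | hx
  · refine antitoneOn_of_deriv_nonpos (convex_Ici 0) hf.continuous.continuousOn
      hf.differentiableOn (fun y hy => ?_) Set.self_mem_Ici hx hx
    rw [interior_Ici, Set.mem_Ioi] at hy
    exact nonpos_of_mul_nonpos_right (hf' y) hy
  · refine monotoneOn_of_deriv_nonneg (convex_Iic 0) hf.continuous.continuousOn
      hf.differentiableOn (fun y hy => ?_) hx Set.self_mem_Iic hx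
    rw [interior_Iic, Set.mem_Iio] at hy
    exact nonneg_of_mul_nonpos_right (hf' y) hy

noncomputable def sonin (P : ℝ[X]) (c : ℝ) : ℝ[X] :=
  ((1 - X ^ 2) * derivative P) ^ 2 + C c * (1 - X ^ 2) * P ^ 2

theorem sonin_eval_zero (P : ℝ[X]) (c : ℝ) :
    (sonin P c).eval 0 = (derivative P).eval 0 ^ 2 + c * P.eval 0 ^ 2 := by
  simp [sonin]

theorem sq_one_sub_sq_mul_derivative_eval_le_sonin (P : ℝ[X]) {c : ℝ} (hc : 0 ≤ c) {x : ℝ}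
    (hx : x ∈ Set.Icc (-1 : ℝ) 1) :
    ((1 - x ^ 2) * (derivative P).eval x) ^ 2 ≤ (sonin P c).eval x := by
  have hx2 : 0 ≤ 1 - x ^ 2 := by nlinarith [hx.1, hx.2]
  simp only [sonin, eval_add, eval_mul, eval_pow, eval_sub, eval_one, eval_X, eval_C]
  nlinarith [mul_nonneg (mul_nonneg hc hx2) (sq_nonneg (P.eval x))]

theorem derivative_sonin {P : ℝ[X]} {c : ℝ}
    (hP : (1 - X ^ 2) * derivative (derivative P) - 2 * X * derivative P + C c * P = 0) :
    derivative (sonin P c) = C (-2 * c) * X * P ^ 2 := by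
  simp only [sonin, derivative_add, derivative_mul, derivative_sq, derivative_sub, derivative_one,
    derivative_X, derivative_C, C_ofNat, map_mul, map_neg]
  linear_combination (2 * (1 - X ^ 2) * derivative P) * hP

theorem sonin_eval_le_eval_zero {P : ℝ[X]} {c : ℝ} (hc : 0 ≤ c)
    (hP : (1 - X ^ 2) * derivative (derivative P) - 2 * X * derivative P + C c * P = 0) (x : ℝ) :
    (sonin P c).eval x ≤ (sonin P c).eval 0 := by
  refine le_apply_zero_of_mul_deriv_nonpos (sonin P c).differentiable (fun y => ?_) x
  rw [Polynomial.deriv, derivative_sonin hP]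
  simp only [eval_mul, eval_C, eval_X, eval_pow]
  nlinarith [mul_nonneg hc (sq_nonneg (y * P.eval y))]

theorem centralBinom_succ_div_four_pow (m : ℕ) :
    (centralBinom (m + 1) : ℝ) / 4 ^ (m + 1)
      = (2 * m + 1) / (2 * m + 2) * (centralBinom m / 4 ^ m) := by
  have h : ((m : ℝ) + 1) * centralBinom (m + 1) = 2 * (2 * m + 1) * centralBinom m := by
    exact_mod_cast succ_mul_centralBinom_succ m
  rw [pow_succ]
  field_simp
  linear_combination 2 * h

theorem Real.Gamma_nat_add_half_eq_centralBinom (m : ℕ) :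
    Gamma (m + 1 / 2) = √π * m ! * (centralBinom m / 4 ^ m) := by
  induction m with
  | zero => simp [-one_div, Gamma_one_half_eq]
  | succ m ih =>
    rw [Nat.cast_succ, add_right_comm, Gamma_add_one (by positivity), ih,
      centralBinom_succ_div_four_pow, Nat.factorial_succ]
    push_cast
    field_simp

theorem Real.Wallis.W_mul_two_mul_add_one_mul_sq_centralBinom_div_four_pow (m : ℕ) :
    W m * (2 * m + 1) * ((centralBinom m : ℝ) / 4 ^ m) ^ 2 = 1 := by
  induction m with
  | zero => simp [W]
  | succ m ih =>
    convert ih using 1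
    rw [W_succ, centralBinom_succ_div_four_pow]
    push_cast
    field_simp
    ring

theorem pi_mul_four_mul_add_one_mul_sq_centralBinom_div_four_pow_le (m : ℕ) :
    π * (4 * m + 1) * ((centralBinom m : ℝ) / 4 ^ m) ^ 2 ≤ 4 := by
  set a : ℕ → ℝ := fun k => (4 * k + 1) * ((centralBinom k : ℝ) / 4 ^ k) ^ 2
  have hmono : Monotone a := by
    refine monotone_nat_of_le_succ fun k => ?_
    simp only [a, centralBinom_succ_div_four_pow]
    push_cast
    rw [mul_pow, ← mul_assoc]
    refine mul_le_mul_of_nonneg_right ?_ (sq_nonneg _)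
    rw [div_pow, mul_div_assoc', le_div_iff₀ (by positivity)]
    nlinarith
  have hlim : Filter.Tendsto a Filter.atTop (nhds (4 / π)) := by
    have ha : a = fun k : ℕ => (2 - (2 * (k : ℝ) + 1)⁻¹) / Real.Wallis.W k := by
      ext k
      have hW := Real.Wallis.W_mul_two_mul_add_one_mul_sq_centralBinom_div_four_pow k
      have := Real.Wallis.W_pos k
      field_simp
      linear_combination (4 * k + 1) * hW
    have hinv : Filter.Tendsto (fun k : ℕ => (2 * (k : ℝ) + 1)⁻¹) Filter.atTop (nhds 0) :=
      tendsto_inv_atTop_zero.comp <| Filter.tendsto_atTop_add_const_right _ 1 <|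
        tendsto_natCast_atTop_atTop.const_mul_atTop two_pos
    have h := (tendsto_const_nhds (x := (2 : ℝ)) |>.sub hinv).div
      Real.Wallis.tendsto_W_nhds_pi_div_two (by positivity)
    rw [ha, show 4 / π = (2 - 0) / (π / 2) by ring]
    exact h
  have := hmono.ge_of_tendsto hlim m
  rw [le_div_iff₀ pi_pos] at this
  linarith

theorem sonin_legendrePoly_two_mul_eval_zero_le (m : ℕ) (hm : m ≠ 0) :
    (sonin (legendrePoly (2 * m)) (((2 * m : ℕ) : ℝ) * ((2 * m : ℕ) + 1))).eval 0
      ≤ (((2 * m : ℕ) : ℝ) * Gamma (((2 * m : ℕ) : ℝ) / 2)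
          / (√π * Gamma ((((2 * m : ℕ) : ℝ) + 1) / 2))) ^ 2 := by
  have hr : (0 : ℝ) < centralBinom m / 4 ^ m :=
    div_pos (by exact_mod_cast centralBinom_pos m) (by positivity)
  have hM : ((2 * m : ℕ) : ℝ) * Gamma (((2 * m : ℕ) : ℝ) / 2)
      / (√π * Gamma ((((2 * m : ℕ) : ℝ) + 1) / 2)) = 2 / (π * (centralBinom m / 4 ^ m)) := by
    rw [show (((2 * m : ℕ) : ℝ) + 1) / 2 = m + 1 / 2 by push_cast; ring,
      Gamma_nat_add_half_eq_centralBinom, ← Gamma_nat_eq_factorial, Gamma_add_one (by positivity),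
      show ((2 * m : ℕ) : ℝ) / 2 = m by push_cast; ring]
    field_simp
    rw [sq_sqrt pi_pos.le]
    push_cast
    ring
  have hsign : ((-1 : ℝ) ^ m) ^ 2 = 1 := by rw [← pow_mul, pow_mul', neg_one_sq, one_pow]
  have hwallis := pi_mul_four_mul_add_one_mul_sq_centralBinom_div_four_pow_le m
  rw [sonin_eval_zero, hM, legendrePoly_two_mul_eval_zero,
    derivative_legendrePoly_two_mul_eval_zero, div_pow, le_div_iff₀ (by positivity), mul_pow,
    hsign, one_mul]
  push_cast
  nlinarith [mul_le_mul hwallis hwallis (by positivity) (by norm_num)]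

theorem sonin_legendrePoly_two_mul_add_one_eval_zero (m : ℕ) :
    (sonin (legendrePoly (2 * m + 1)) (((2 * m + 1 : ℕ) : ℝ) * ((2 * m + 1 : ℕ) + 1))).eval 0
      = (((2 * m + 1 : ℕ) : ℝ) * Gamma (((2 * m + 1 : ℕ) : ℝ) / 2)
          / (√π * Gamma ((((2 * m + 1 : ℕ) : ℝ) + 1) / 2))) ^ 2 := by
  have hsign : ((-1 : ℝ) ^ m) ^ 2 = 1 := by rw [← pow_mul, pow_mul', neg_one_sq, one_pow]
  rw [show ((2 * m + 1 : ℕ) : ℝ) / 2 = m + 1 / 2 by push_cast; ring,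
    show (((2 * m + 1 : ℕ) : ℝ) + 1) / 2 = m + 1 by push_cast; ring,
    Gamma_nat_add_half_eq_centralBinom, Gamma_nat_eq_factorial, sonin_eval_zero,
    legendrePoly_two_mul_add_one_eval_zero, derivative_legendrePoly_two_mul_add_one_eval_zero,
    mul_pow, mul_pow, hsign]
  field_simp
  push_cast
  ring

theorem sonin_legendrePoly_eval_zero_le (n : ℕ) (hn : n ≠ 0) :
    (sonin (legendrePoly n) (n * (n + 1))).eval 0
      ≤ (n * Gamma (n / 2) / (√π * Gamma ((n + 1) / 2))) ^ 2 := by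
  obtain ⟨m, rfl | rfl⟩ := n.even_or_odd'
  · exact sonin_legendrePoly_two_mul_eval_zero_le m (by omega)
  · exact (sonin_legendrePoly_two_mul_add_one_eval_zero m).le

theorem LL_gamma_bound_general (n : ℕ) (x : ℝ) (hx : x ∈ Set.Icc (-1 : ℝ) 1) :
    |(1 - x ^ 2) * deriv (legendre n) x| / (n * (n + 1))
      ≤ Real.Gamma ((n : ℝ) / 2)
          / (Real.sqrt Real.pi * ((n : ℝ) + 1) * Real.Gamma (((n : ℝ) + 1) / 2)) := by
  rcases n.eq_zero_or_pos with rfl | hn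
  -- both sides are `0`, by division by zero and `Γ 0 = 0`
  · simp
  set M := n * Gamma (n / 2) / (√π * Gamma ((n + 1) / 2))
  have hM : 0 ≤ M := by positivity
  have hRHS : Gamma (n / 2) / (√π * (n + 1) * Gamma ((n + 1) / 2)) = M / (n * (n + 1)) := by
    simp only [M]
    field_simp
  rw [hRHS, deriv_legendre]
  gcongr
  refine abs_le_of_sq_le_sq ?_ hM
  calc ((1 - x ^ 2) * (derivative (legendrePoly n)).eval x) ^ 2
      ≤ (sonin (legendrePoly n) (n * (n + 1))).eval x :=
        sq_one_sub_sq_mul_derivative_eval_le_sonin _ (by positivity) hx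
    _ ≤ (sonin (legendrePoly n) (n * (n + 1))).eval 0 :=
        sonin_eval_le_eval_zero (by positivity) (legendrePoly_ode n) x
    _ ≤ M ^ 2 := sonin_legendrePoly_eval_zero_le n hn.ne'

theorem LL_gamma_bound (n : ℕ) (hn : 1 ≤ n) (x : ℝ) (hx : x ∈ Set.Icc (-1 : ℝ) 1) :
    |(1 - x ^ 2) * deriv (legendre n) x| / (n * (n + 1))
      ≤ Real.Gamma ((n : ℝ) / 2)
          / (Real.sqrt Real.pi * ((n : ℝ) + 1) * Real.Gamma (((n : ℝ) + 1) / 2)) :=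
  LL_gamma_bound_general n x hx
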